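/- arXiv:2105.12111 — 8 statements merged into one kernel-verified Lean document; each statement's English description precedes it below -/
import Mathlib

section
/- With the notation of the blowup-monoid: if all a_i are units of R and N(a,D) is invertible, then M(a,D) is invertible and M(a,D)^{-1} = M((a_1^{-1},…,a_k^{-1})^T, −diag(a)^{-1} D N(a,D)^{-1}). -/
open Matrix BigOperators

/-- The blowup block matrix `M(a,D)`. -/
def blowM {R : Type*} [CommRing R] {k : ℕ} (n : Fin k → ℕ)
    (p q : (i : Fin k) → Fin (n i) → R) (a : Fin k → R)
    (D : Matrix (Fin k) (Fin k) R) :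
    Matrix (Σ i : Fin k, Fin (n i)) (Σ i : Fin k, Fin (n i)) R :=
  Matrix.of fun x y =>
    (if x = y then a x.1 else 0) + D x.1 y.1 * p x.1 x.2 * q y.1 y.2

/-- The matrix `N(a,D) = diag(a) + diag(qᵢᵀpᵢ)·D`. -/
def blowN {R : Type*} [CommRing R] {k : ℕ} (n : Fin k → ℕ)
    (p q : (i : Fin k) → Fin (n i) → R) (a : Fin k → R)
    (D : Matrix (Fin k) (Fin k) R) : Matrix (Fin k) (Fin k) R :=
  Matrix.diagonal a + Matrix.diagonal (fun i => ∑ l, q i l * p i l) * D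

section aux
variable {R : Type*} [CommRing R] {k : ℕ} (n : Fin k → ℕ)
  (p q : (i : Fin k) → Fin (n i) → R)

def wM (D : Matrix (Fin k) (Fin k) R) :
    Matrix (Σ i : Fin k, Fin (n i)) (Σ i : Fin k, Fin (n i)) R :=
  Matrix.of fun x y => D x.1 y.1 * p x.1 x.2 * q y.1 y.2

lemma blowM_eq (a : Fin k → R) (D : Matrix (Fin k) (Fin k) R) :
    blowM n p q a D = Matrix.diagonal (fun x => a x.1) + wM n p q D := by
  ext x y
  simp [blowM, wM, Matrix.diagonal_apply]

lemma wM_add (D E : Matrix (Fin k) (Fin k) R) :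
    wM n p q (D + E) = wM n p q D + wM n p q E := by
  ext x y; simp [wM]; ring

lemma diag_mul_wM (a : Fin k → R) (E : Matrix (Fin k) (Fin k) R) :
    Matrix.diagonal (fun x : Σ i : Fin k, Fin (n i) => a x.1) * wM n p q E
      = wM n p q (Matrix.diagonal a * E) := by
  ext x y
  simp [wM, Matrix.diagonal_mul]
  ring

lemma wM_mul_diag (a : Fin k → R) (D : Matrix (Fin k) (Fin k) R) :
    wM n p q D * Matrix.diagonal (fun x : Σ i : Fin k, Fin (n i) => a x.1)
      = wM n p q (D * Matrix.diagonal a) := by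
  ext x y
  simp [wM, Matrix.mul_diagonal]
  ring

lemma wM_mul_wM (D E : Matrix (Fin k) (Fin k) R) :
    wM n p q D * wM n p q E
      = wM n p q (D * Matrix.diagonal (fun i => ∑ l, q i l * p i l) * E) := by
  ext x y
  have hs : (D * Matrix.diagonal (fun i => ∑ l, q i l * p i l) * E) x.1 y.1
      = ∑ l, D x.1 l * ((∑ m, q l m * p l m) * E l y.1) := by
    rw [Matrix.mul_assoc, Matrix.mul_apply]
    simp only [Matrix.diagonal_mul]
  simp only [wM, Matrix.of_apply]
  rw [hs, Matrix.mul_apply]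
  simp only [Matrix.of_apply]
  rw [← Finset.univ_sigma_univ, Finset.sum_sigma]
  simp_rw [Finset.sum_mul]
  refine Finset.sum_congr rfl fun l _ => ?_
  rw [Finset.mul_sum, Finset.sum_mul, Finset.sum_mul]
  exact Finset.sum_congr rfl fun m _ => by ring

lemma blowM_mul (a b : Fin k → R) (D E : Matrix (Fin k) (Fin k) R) :
    blowM n p q a D * blowM n p q b E
      = blowM n p q (a * b)
          (Matrix.diagonal a * E + D * Matrix.diagonal b
            + D * Matrix.diagonal (fun i => ∑ l, q i l * p i l) * E) := by
  rw [blowM_eq, blowM_eq, blowM_eq, add_mul, mul_add, mul_add,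
    Matrix.diagonal_mul_diagonal, diag_mul_wM, wM_mul_diag, wM_mul_wM,
    wM_add, wM_add]
  have : (fun x : Σ i : Fin k, Fin (n i) => (a * b) x.1)
      = fun x => a x.1 * b x.1 := rfl
  rw [this]
  abel

lemma blowM_one : blowM n p q 1 0 = (1 : Matrix _ _ R) := by
  ext x y
  simp [blowM, Matrix.one_apply]
end aux

/-- if all `aᵢ` are units and `N(a,D)` is invertible, then `M(a,D)` is
invertible with inverse `M(a⁻¹, -diag(a)⁻¹ D N(a,D)⁻¹)`. -/
theorem blowM_inv {R : Type*} [CommRing R] (k : ℕ) (n : Fin k → ℕ)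
    (p q : (i : Fin k) → Fin (n i) → R) (a : Fin k → R)
    (D : Matrix (Fin k) (Fin k) R)
    (ha : ∀ i, IsUnit (a i)) (hN : IsUnit (blowN n p q a D)) :
    IsUnit (blowM n p q a D) ∧
    (blowM n p q a D)⁻¹ =
      blowM n p q (fun i => Ring.inverse (a i))
        (-((Matrix.diagonal a)⁻¹ * D * (blowN n p q a D)⁻¹)) := by
  set a' : Fin k → R := fun i => Ring.inverse (a i) with ha'
  set S : Matrix (Fin k) (Fin k) R :=
    Matrix.diagonal (fun i => ∑ l, q i l * p i l) with hS
  set N : Matrix (Fin k) (Fin k) R := blowN n p q a D with hNdef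
  set Q : Matrix (Fin k) (Fin k) R := (Matrix.diagonal a)⁻¹ * D * N⁻¹ with hQ
  have haa' : ∀ i, a i * a' i = 1 := fun i => Ring.mul_inverse_cancel _ (ha i)
  have ha'a : ∀ i, a' i * a i = 1 := fun i => Ring.inverse_mul_cancel _ (ha i)
  have hAA' : Matrix.diagonal a * Matrix.diagonal a' = 1 := by
    rw [Matrix.diagonal_mul_diagonal, funext haa']
    exact Matrix.diagonal_one
  have hA'A : Matrix.diagonal a' * Matrix.diagonal a = 1 := by
    rw [Matrix.diagonal_mul_diagonal, funext ha'a]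
    exact Matrix.diagonal_one
  have hAinv : (Matrix.diagonal a)⁻¹ = Matrix.diagonal a' :=
    Matrix.inv_eq_right_inv hAA'
  have hNNi : N * N⁻¹ = 1 :=
    Matrix.mul_nonsing_inv _ ((Matrix.isUnit_iff_isUnit_det _).mp hN)
  have h1 : Matrix.diagonal a * Q = D * N⁻¹ := by
    rw [hQ, hAinv]
    simp only [← Matrix.mul_assoc]
    rw [hAA', one_mul]
  have hcomm : S * Matrix.diagonal a' = Matrix.diagonal a' * S := by
    rw [hS, Matrix.diagonal_mul_diagonal, Matrix.diagonal_mul_diagonal,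
      funext fun i => mul_comm ((∑ l, q i l * p i l)) (a' i)]
  have hNsplit : N = Matrix.diagonal a + S * D := rfl
  have h3 : D * Matrix.diagonal a' * N = D + D * Matrix.diagonal a' * S * D := by
    rw [hNsplit, mul_add]
    rw [Matrix.mul_assoc D (Matrix.diagonal a') (Matrix.diagonal a), hA'A,
      mul_one]
    simp only [← Matrix.mul_assoc]
  have h2 : D * S * Q = D * Matrix.diagonal a' - D * N⁻¹ := by
    have : D * S * Q = D * Matrix.diagonal a' * S * D * N⁻¹ := by
      rw [hQ, hAinv]
      simp only [← Matrix.mul_assoc]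
      rw [Matrix.mul_assoc D S (Matrix.diagonal a'), hcomm]
      simp only [← Matrix.mul_assoc]
    rw [this]
    have h4 : D * Matrix.diagonal a' * S * D
        = D * Matrix.diagonal a' * N - D := by
      rw [h3]; abel
    rw [h4, sub_mul, Matrix.mul_assoc (D * Matrix.diagonal a') N N⁻¹, hNNi,
      mul_one]
  have hkey : Matrix.diagonal a * (-Q) + D * Matrix.diagonal a'
      + D * S * (-Q) = 0 := by
    rw [mul_neg, mul_neg, h1, h2]
    abel
  have haa1 : a * a' = 1 := by funext i; exact haa' i
  have hmul : blowM n p q a D * blowM n p q a' (-Q) = 1 := by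
    rw [blowM_mul, haa1, ← hS, hkey, blowM_one]
  refine ⟨?_, Matrix.inv_eq_right_inv hmul⟩
  exact (Matrix.isUnit_iff_isUnit_det _).mpr
    (Matrix.isUnit_det_of_right_inverse hmul)
end

section
/- The map Ψ : (a, D) ↦ M(a,D) is a monoid morphism from the set R^k × R^{k×k} equipped with the product (a,D)∘(a',D') := (a∘a', Δ_a D' + D N(a',D')) — where a∘a' is the entrywise product and Δ_a = diag(a) — to the multiplicative monoid of square matrices of size n_1+⋯+n_k over R. In particular, M((1,…,1)^T, 0) is the identity matrix and M(a,D)·M(a',D') = M((a,D)∘(a',D')). -/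
open Matrix BigOperators

/-- `(a,D) ↦ M(a,D)` is a monoid morphism from the blowup-monoid
(with product `(a,D)∘(a',D') = (a∘a', Δₐ D' + D N(a',D'))`) to square matrices:
it sends the identity `((1,…,1), 0)` to the identity matrix, and products to products. -/
theorem blowM_monoidHom {R : Type*} [CommRing R] (k : ℕ) (n : Fin k → ℕ)
    (p q : (i : Fin k) → Fin (n i) → R) :
    blowM n p q (fun _ => (1 : R)) 0 = 1 ∧
    ∀ (a a' : Fin k → R) (D D' : Matrix (Fin k) (Fin k) R),
      blowM n p q a D * blowM n p q a' D' =
        blowM n p q (fun i => a i * a' i)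
          (Matrix.diagonal a * D' + D * blowN n p q a' D') := by
  constructor
  · ext x y
    simp [blowM, Matrix.one_apply]
  · intro a a' D D'
    ext x y
    rw [Matrix.mul_apply]
    simp only [blowM, blowN, of_apply, add_mul, mul_add, Finset.sum_add_distrib,
      ite_mul, mul_ite, zero_mul, mul_zero, Finset.sum_ite_eq, Finset.sum_ite_eq',
      Finset.mem_univ, if_true, Matrix.add_apply, Matrix.mul_apply, Matrix.diagonal_apply]
    have hs : ∑ z : Σ i : Fin k, Fin (n i),
        D x.1 z.1 * p x.1 x.2 * q z.1 z.2 * (D' z.1 y.1 * p z.1 z.2 * q y.1 y.2) =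
        (∑ l, D x.1 l * ((∑ u, q l u * p l u) * D' l y.1)) * p x.1 x.2 * q y.1 y.2 := by
      rw [← Finset.univ_sigma_univ, Finset.sum_sigma, Finset.sum_mul, Finset.sum_mul]
      refine Finset.sum_congr rfl fun l _ => ?_
      simp only [Finset.sum_mul, Finset.mul_sum]
      refine Finset.sum_congr rfl fun u _ => ?_
      ring
    rw [hs]
    split_ifs with h
    · subst h; ring
    · ring
end

section
/- With p_X(n) = det(Δ_a + Δ_n 𝒟_X) as above, for every subset I ⊆ {1,…,k}, the coefficient of the monomial ∏_{i∈I} n_i in p_X equals det((𝒟_X)_{I×I}) · ∏_{j∉I} (−2 d(x_j, X∖{x_j})), where (𝒟_X)_{I×I} is the principal submatrix of 𝒟_X on rows and columns indexed by I. -/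
/-! Expanding `det (diagonal a + diagonal n * 𝒟)` multilinearly along its rows, where row `i` is
`a i • eᵢ + n i • 𝒟ᵢ`, gives one term per subset `S` of rows: `∏_{i ∈ S} n i * ∏_{i ∉ S} a i`
times the determinant of the matrix with rows `𝒟ᵢ` for `i ∈ S` and `eᵢ` otherwise, which is the
principal minor of `𝒟` on `S`. Distinct `S` give distinct squarefree monomials, so the
coefficient of `∏_{i ∈ I} n i` is the term `S = I`. -/

open Matrix MvPolynomial

theorem Finsupp.sum_single_one_inj {ι : Type*} {s t : Finset ι} :
    ∑ i ∈ s, Finsupp.single i 1 = ∑ i ∈ t, Finsupp.single i 1 ↔ s = t := by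
  refine ⟨fun h => ?_, fun h => h ▸ rfl⟩
  simpa [Finsupp.toMultiset_sum_single] using congrArg Finsupp.toMultiset h

theorem Matrix.det_diagonal_add_diagonal_mul {n R : Type*} [Fintype n] [DecidableEq n]
    [CommRing R] (a x : n → R) (B : Matrix n n R) :
    det (diagonal a + diagonal x * B) =
      ∑ s : Finset n, (∏ i ∈ s, x i) * (∏ i ∈ sᶜ, a i) *
        det (B.submatrix ((↑) : s → n) (↑)) := by
  have hrows : diagonal a + diagonal x * B =
      of ((fun i => x i • B.row i) + fun i => a i • (1 : Matrix n n R).row i) := by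
    ext i j
    simp [diagonal_apply, one_apply, add_comm]
  have hpiece : ∀ s : Finset n,
      s.piecewise (fun i => x i • B.row i) (fun i => a i • (1 : Matrix n n R).row i) =
        fun i => s.piecewise x a i • s.piecewise B.row (1 : Matrix n n R).row i := by
    intro s
    funext i
    by_cases hi : i ∈ s <;> simp [Finset.piecewise, hi]
  rw [hrows]
  change detRowAlternating ((fun i => x i • B.row i) + fun i => a i • (1 : Matrix n n R).row i) = _
  rw [AlternatingMap.map_add_univ]
  refine Finset.sum_congr rfl fun s _ => ?_
  rw [hpiece, AlternatingMap.map_smul_univ, smul_eq_mul, Finset.prod_piecewise,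
    Finset.univ_inter, ← Finset.compl_eq_univ_sdiff]
  exact congrArg _ (det_piecewise_one_eq_submatrix_det B s)

theorem MvPolynomial.coeff_det_diagonal_C_add_diagonal_X_mul {σ R : Type*} [Fintype σ]
    [DecidableEq σ] [CommRing R] (a : σ → R) (B : Matrix σ σ R) (I : Finset σ) :
    coeff (∑ i ∈ I, Finsupp.single i 1)
        (det (diagonal (fun i => C (a i)) + diagonal X * B.map C)) =
      det (B.submatrix ((↑) : I → σ) (↑)) * ∏ j ∈ Iᶜ, a j := by
  have hterm : ∀ s : Finset σ,
      (∏ i ∈ s, (X i : MvPolynomial σ R)) * (∏ i ∈ sᶜ, C (a i)) *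
          det ((B.map C).submatrix ((↑) : s → σ) (↑)) =
        monomial (∑ i ∈ s, Finsupp.single i 1)
          (det (B.submatrix ((↑) : s → σ) (↑)) * ∏ j ∈ sᶜ, a j) := by
    intro s
    rw [submatrix_map, ← RingHom.mapMatrix_apply, ← RingHom.map_det, ← map_prod,
      monomial_sum_index, map_mul]
    change _ = _ * ∏ i ∈ s, X i
    ring
  simp_rw [det_diagonal_add_diagonal_mul, hterm, coeff_sum, coeff_monomial,
    Finsupp.sum_single_one_inj, Finset.sum_ite_eq', Finset.mem_univ, if_true]

theorem blowup_poly_coeff_general (k : ℕ)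
    (d : Fin k → Fin k → ℝ) (e : Fin k → ℝ) :
    ∀ P : MvPolynomial (Fin k) ℝ,
      P = (Matrix.diagonal (fun i => MvPolynomial.C (-2 * e i)) +
            Matrix.diagonal (fun i => (MvPolynomial.X i : MvPolynomial (Fin k) ℝ)) *
              (Matrix.of fun i j => MvPolynomial.C (if i = j then 2 * e i else d i j))).det →
      ∀ I : Finset (Fin k),
        MvPolynomial.coeff (∑ i ∈ I, Finsupp.single i 1) P =
          ((Matrix.of fun i j : Fin k => if i = j then 2 * e i else d i j).submatrix
              (fun x : {x : Fin k // x ∈ I} => (x : Fin k))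
              (fun x : {x : Fin k // x ∈ I} => (x : Fin k))).det *
            ∏ j ∈ Iᶜ, (-2 * e j) := by
  rintro P rfl I
  exact coeff_det_diagonal_C_add_diagonal_X_mul (fun i => -2 * e i)
    (of fun i j => if i = j then 2 * e i else d i j) I

/-- for the blowup-polynomial `p_X(n) = det(Δ_a + Δ_n 𝒟_X)` of a finite
metric space, the coefficient of `∏_{i ∈ I} n_i` equals
`det((𝒟_X)_{I×I}) * ∏_{j ∉ I} (-2 d(x_j, X∖{x_j}))`. -/
theorem blowup_poly_coeff (k : ℕ) (hk : 2 ≤ k)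
    (d : Fin k → Fin k → ℝ) (e : Fin k → ℝ)
    (hd0 : ∀ i, d i i = 0) (hsymm : ∀ i j, d i j = d j i)
    (hpos : ∀ i j, i ≠ j → 0 < d i j)
    (htri : ∀ i j l, d i l ≤ d i j + d j l)
    (he : ∀ i, IsLeast {r : ℝ | ∃ j, j ≠ i ∧ r = d i j} (e i)) :
    ∀ P : MvPolynomial (Fin k) ℝ,
      P = (Matrix.diagonal (fun i => MvPolynomial.C (-2 * e i)) +
            Matrix.diagonal (fun i => (MvPolynomial.X i : MvPolynomial (Fin k) ℝ)) *
              (Matrix.of fun i j => MvPolynomial.C (if i = j then 2 * e i else d i j))).det →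
      ∀ I : Finset (Fin k),
        MvPolynomial.coeff (∑ i ∈ I, Finsupp.single i 1) P =
          ((Matrix.of fun i j : Fin k => if i = j then 2 * e i else d i j).submatrix
              (fun x : {x : Fin k // x ∈ I} => (x : Fin k))
              (fun x : {x : Fin k // x ∈ I} => (x : Fin k))).det *
            ∏ j ∈ Iᶜ, (-2 * e j) :=
  blowup_poly_coeff_general k d e
end

section
/- Let (X,d) be a finite metric space with k points. Then the blowup-polynomial p_X(z_1,…,z_k) = det(Δ_a + Δ_z 𝒟_X), where a_i = −2 d(x_i, X∖{x_i}) < 0, is real-stable. -/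
open Matrix BigOperators

/-- the blowup-polynomial `p_X(z) = det(Δ_a + Δ_z 𝒟_X)` of any finite
metric space is real-stable: it does not vanish when all arguments lie in the
open upper half-plane. -/
theorem blowup_poly_real_stable (k : ℕ) (hk : 2 ≤ k)
    (d : Fin k → Fin k → ℝ) (e : Fin k → ℝ)
    (hd0 : ∀ i, d i i = 0) (hsymm : ∀ i j, d i j = d j i)
    (hpos : ∀ i j, i ≠ j → 0 < d i j)
    (htri : ∀ i j l, d i l ≤ d i j + d j l)
    (he : ∀ i, IsLeast {r : ℝ | ∃ j, j ≠ i ∧ r = d i j} (e i)) :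
    ∀ z : Fin k → ℂ, (∀ i, 0 < (z i).im) →
      (Matrix.diagonal (fun i => ((-2 * e i : ℝ) : ℂ)) +
        Matrix.diagonal z *
          (Matrix.of fun i j => (((if i = j then 2 * e i else d i j) : ℝ) : ℂ))).det ≠ 0 := by
  intro z hz hdet
  -- each `e i` is positive
  have hepos : ∀ i, 0 < e i := by
    intro i
    obtain ⟨⟨j, hj, hej⟩, -⟩ := he i
    rw [hej]
    exact hpos i j (Ne.symm hj)
  have h2e : ∀ i, ((2 * e i : ℝ) : ℂ) ≠ 0 := by
    intro i
    exact_mod_cast ne_of_gt (by linarith [hepos i] : (0:ℝ) < 2 * e i)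
  set N : Matrix (Fin k) (Fin k) ℂ :=
    Matrix.of fun i j => (((if i = j then 2 * e i else d i j) : ℝ) : ℂ) with hN
  have hNsymm : ∀ i j, N i j = N j i := by
    intro i j
    by_cases h : i = j
    · subst h; rfl
    · simp only [hN, Matrix.of_apply, if_neg h, if_neg (Ne.symm h), hsymm i j]
  have hNreal : ∀ i j, (starRingEnd ℂ) (N i j) = N i j := by
    intro i j
    simp only [hN, Matrix.of_apply, Complex.conj_ofReal]
  -- get a nonzero kernel vector
  obtain ⟨v, hv0, hv⟩ := (Matrix.exists_mulVec_eq_zero_iff).2 hdet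
  set u : Fin k → ℂ := N *ᵥ v with hu
  have key : ∀ i, z i * u i = ((2 * e i : ℝ) : ℂ) * v i := by
    intro i
    have h1 := congrFun hv i
    rw [Matrix.add_mulVec, ← Matrix.mulVec_mulVec] at h1
    simp only [Pi.add_apply, Matrix.mulVec_diagonal, Pi.zero_apply, ← hu] at h1
    have h2 : ((-2 * e i : ℝ) : ℂ) = -((2 * e i : ℝ) : ℂ) := by push_cast; ring
    rw [h2] at h1
    linear_combination h1
  have hvu : ∀ i, v i = z i * u i / ((2 * e i : ℝ) : ℂ) := by
    intro i
    rw [key i, mul_div_cancel_left₀ _ (h2e i)]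
  -- the Hermitian form
  set S : ℂ := ∑ i, (starRingEnd ℂ) (v i) * u i with hS
  have hSexp : S = ∑ i, ∑ j, (starRingEnd ℂ) (v i) * (N i j * v j) := by
    simp only [hS, hu, Matrix.mulVec, dotProduct, Finset.mul_sum]
  -- S is real since N is real symmetric
  have hSreal : (starRingEnd ℂ) S = S := by
    have hc : (starRingEnd ℂ) S = ∑ j, ∑ i, v i * (N i j * (starRingEnd ℂ) (v j)) := by
      rw [hSexp]
      simp only [map_sum, _root_.map_mul, Complex.conj_conj, hNreal]
      exact Finset.sum_comm
    rw [hc, hSexp]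
    refine Finset.sum_congr rfl fun a _ => Finset.sum_congr rfl fun b _ => ?_
    rw [hNsymm b a]
    ring
  have hSim : S.im = 0 := by
    have := congrArg Complex.im hSreal
    simp only [Complex.conj_im] at this
    linarith
  -- second expression for S
  have hterm : ∀ i, (starRingEnd ℂ) (v i) * u i =
      (starRingEnd ℂ) (z i) * ((Complex.normSq (u i) / (2 * e i) : ℝ) : ℂ) := by
    intro i
    rw [hvu i]
    have hns : ((Complex.normSq (u i) : ℝ) : ℂ) = u i * (starRingEnd ℂ) (u i) :=
      (Complex.mul_conj (u i)).symm
    rw [Complex.ofReal_div, hns]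
    rw [map_div₀, _root_.map_mul, Complex.conj_ofReal]
    field_simp [h2e i]
  have hSim2 : S.im = ∑ i, -((z i).im * (Complex.normSq (u i) / (2 * e i))) := by
    rw [hS]
    rw [Complex.im_sum]
    refine Finset.sum_congr rfl fun i _ => ?_
    rw [hterm i, Complex.mul_im, Complex.ofReal_im, Complex.ofReal_re,
      Complex.conj_re, Complex.conj_im]
    ring
  -- conclude each u i = 0
  have hsum : ∑ i, (z i).im * (Complex.normSq (u i) / (2 * e i)) = 0 := by
    have h0 : ∑ i, -((z i).im * (Complex.normSq (u i) / (2 * e i))) = 0 :=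
      hSim2.symm.trans hSim
    rw [Finset.sum_neg_distrib] at h0
    exact neg_eq_zero.mp h0
  have hnn : ∀ i ∈ Finset.univ, 0 ≤ (z i).im * (Complex.normSq (u i) / (2 * e i)) := by
    intro i _
    have h1 : 0 ≤ Complex.normSq (u i) / (2 * e i) :=
      div_nonneg (Complex.normSq_nonneg _) (by linarith [hepos i])
    exact mul_nonneg (le_of_lt (hz i)) h1
  have hzero := (Finset.sum_eq_zero_iff_of_nonneg hnn).1 hsum
  have hu0 : ∀ i, u i = 0 := by
    intro i
    have h := hzero i (Finset.mem_univ i)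
    have h1 : Complex.normSq (u i) / (2 * e i) = 0 := by
      rcases mul_eq_zero.mp h with h' | h'
      · exact absurd h' (ne_of_gt (hz i))
      · exact h'
    have h2 : Complex.normSq (u i) = 0 := by
      rcases div_eq_zero_iff.mp h1 with h' | h'
      · exact h'
      · exact absurd h' (ne_of_gt (by linarith [hepos i]))
    exact Complex.normSq_eq_zero.mp h2
  apply hv0
  funext i
  rw [hvu i, hu0 i, mul_zero, zero_div]
  rfl
end

section
/- Let X be a finite metric space whose metric is a rescaled discrete metric d(x,y) = c·1_{x≠y} for some c > 0, with |X| = k. Then the blowup-polynomial satisfies p_X(n_1,…,n_k) = c^k ( ∏_{i=1}^k (n_i − 2) + Σ_{i=1}^k n_i ∏_{i'≠i} (n_{i'} − 2) ); in particular p_X is a symmetric polynomial in n_1,…,n_k. -/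
/-! The blowup matrix of the rescaled discrete metric is `c • (diagonal (nᵢ - 2) + n 1ᵀ)`, a
rank-one perturbation of a diagonal matrix, so the matrix determinant lemma (applied over the
fraction field, where `diagonal (nᵢ - 2)` is invertible) gives the formula. Symmetry holds because
renaming the variables along a permutation permutes the rows and columns of the blowup matrix
simultaneously, which leaves its determinant unchanged. -/

open Matrix MvPolynomial BigOperators

theorem Matrix.det_diagonal_add_replicateCol_mul_replicateRow {K ι : Type*} [Field K]
    [Fintype ι] [DecidableEq ι] {d : ι → K} (hd : ∀ i, d i ≠ 0) (u v : ι → K) :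
    (diagonal d + replicateCol Unit u * replicateRow Unit v).det =
      ∏ i, d i + ∑ i, v i * u i * ∏ j ∈ Finset.univ.erase i, d j := by
  have hA : IsUnit (diagonal d).det := by
    simpa [isUnit_iff_ne_zero, Finset.prod_ne_zero_iff] using hd
  have hinv : (diagonal d)⁻¹ = diagonal fun i => (d i)⁻¹ :=
    inv_eq_left_inv (by simp [hd])
  have hentry : (replicateRow Unit v * (diagonal d)⁻¹ * replicateCol Unit u) () () =
      ∑ i, v i * (d i)⁻¹ * u i := by
    simp [hinv, mul_apply, diagonal_apply]
  rw [det_add_replicateCol_mul_replicateRow hA, det_unique (1 + _), add_apply, one_apply_eq,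
    hentry, det_diagonal, mul_add, mul_one, Finset.mul_sum]
  congr 1
  refine Finset.sum_congr rfl fun i _ => ?_
  rw [← Finset.mul_prod_erase _ d (Finset.mem_univ i)]
  field_simp [hd i]

theorem Matrix.det_diagonal_add_replicateCol_mul_replicateRow_of_isDomain {R ι : Type*}
    [CommRing R] [IsDomain R] [Fintype ι] [DecidableEq ι] {d : ι → R} (hd : ∀ i, d i ≠ 0)
    (u v : ι → R) :
    (diagonal d + replicateCol Unit u * replicateRow Unit v).det =
      ∏ i, d i + ∑ i, v i * u i * ∏ j ∈ Finset.univ.erase i, d j := by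
  let φ := algebraMap R (FractionRing R)
  have hφ : Function.Injective φ := IsFractionRing.injective R (FractionRing R)
  apply hφ
  have hmap : (diagonal d + replicateCol Unit u * replicateRow Unit v).map φ =
      diagonal (fun i => φ (d i)) +
        replicateCol Unit (fun i => φ (u i)) * replicateRow Unit (fun i => φ (v i)) := by
    ext i j
    by_cases h : i = j <;> simp [mul_apply, h]
  rw [RingHom.map_det, RingHom.mapMatrix_apply, hmap,
    det_diagonal_add_replicateCol_mul_replicateRow fun i => (map_ne_zero_iff φ hφ).2 (hd i)]
  simp [map_prod]

theorem MvPolynomial.X_sub_C_ne_zero {R σ : Type*} [CommRing R] [Nontrivial R] (i : σ) (a : R) :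
    (X i - C a : MvPolynomial σ R) ≠ 0 := by
  intro h
  simpa using congrArg (eval fun _ => a + 1) h

theorem Matrix.diagonal_add_diagonal_mul_of_ite_eq_smul {R ι : Type*} [CommRing R]
    [Fintype ι] [DecidableEq ι] (c : R) (n : ι → R) :
    diagonal (fun _ => -2 * c) + diagonal n * of (fun i j => if i = j then 2 * c else c) =
      c • (diagonal (fun i => n i - 2) + replicateCol Unit n * replicateRow Unit (1 : ι → R)) := by
  ext i j
  rw [add_apply, diagonal_mul]
  by_cases h : i = j <;> simp [h, mul_apply] <;> ring

theorem MvPolynomial.isSymmetric_det {R σ : Type*} [CommRing R] [Fintype σ] [DecidableEq σ]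
    (M : Matrix σ σ (MvPolynomial σ R))
    (hM : ∀ e : Equiv.Perm σ, M.map (rename e) = M.submatrix e e) : M.det.IsSymmetric := by
  intro e
  rw [← AlgHom.coe_toRingHom, RingHom.map_det, RingHom.mapMatrix_apply, AlgHom.coe_toRingHom,
    hM, det_submatrix_equiv_self]

theorem blowup_poly_discrete_metric_general (k : ℕ) (c : ℝ) :
    ∀ P : MvPolynomial (Fin k) ℝ,
      P = (Matrix.diagonal (fun _ : Fin k => MvPolynomial.C (-2 * c)) +
            Matrix.diagonal (fun i => (MvPolynomial.X i : MvPolynomial (Fin k) ℝ)) *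
              (Matrix.of fun i j : Fin k =>
                MvPolynomial.C (if i = j then 2 * c else c))).det →
      P = MvPolynomial.C (c ^ k) *
            ((∏ i, (MvPolynomial.X i - 2)) +
              ∑ i, MvPolynomial.X i * ∏ i' ∈ Finset.univ.erase i, (MvPolynomial.X i' - 2)) ∧
      P.IsSymmetric := by
  intro P hP
  have hsymm : P.IsSymmetric := hP ▸ isSymmetric_det _ fun e => by
    ext i j
    by_cases h : i = j <;> simp [mul_apply, diagonal_apply, h]
  refine ⟨?_, hsymm⟩
  simp only [map_mul, map_neg, map_ofNat, apply_ite] at hP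
  have hd : ∀ i : Fin k, (X i - 2 : MvPolynomial (Fin k) ℝ) ≠ 0 := fun i => by
    simpa [map_ofNat] using X_sub_C_ne_zero i (2 : ℝ)
  rw [hP, diagonal_add_diagonal_mul_of_ite_eq_smul, det_smul,
    det_diagonal_add_replicateCol_mul_replicateRow_of_isDomain hd, Fintype.card_fin, ← map_pow]
  simp

/-- for the rescaled discrete metric `d(x,y) = c·1_{x≠y}` (`c > 0`)
on `k` points, the blowup-polynomial equals
`c^k (∏ᵢ (nᵢ - 2) + ∑ᵢ nᵢ ∏_{i'≠i} (n_{i'} - 2))`; in particular it is a symmetric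
polynomial in `n_1, …, n_k`. -/
theorem blowup_poly_discrete_metric (k : ℕ) (hk : 2 ≤ k) (c : ℝ) (hc : 0 < c) :
    ∀ P : MvPolynomial (Fin k) ℝ,
      P = (Matrix.diagonal (fun _ : Fin k => MvPolynomial.C (-2 * c)) +
            Matrix.diagonal (fun i => (MvPolynomial.X i : MvPolynomial (Fin k) ℝ)) *
              (Matrix.of fun i j : Fin k =>
                MvPolynomial.C (if i = j then 2 * c else c))).det →
      P = MvPolynomial.C (c ^ k) *
            ((∏ i, (MvPolynomial.X i - 2)) +
              ∑ i, MvPolynomial.X i * ∏ i' ∈ Finset.univ.erase i, (MvPolynomial.X i' - 2)) ∧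
      P.IsSymmetric :=
  blowup_poly_discrete_metric_general k c
end

section
/- Let X be a finite metric space with |X| = 3 and points x_1, x_2, x_3 with pairwise distances d'_{12} ≤ d'_{13} ≤ d'_{23}. If the blowup-polynomial p_X(n_1,n_2,n_3) is symmetric in n_1, n_2, n_3, then d'_{12} = d'_{13} = d'_{23}, i.e., the metric is a rescaled discrete metric. -/
open Matrix MvPolynomial BigOperators

/-!
A symmetric polynomial takes the same value at all permutations of a point. At the three points
with one coordinate `0` and the others `1`, one row of `N` reduces to its diagonal entry and the
determinant is a single product: `p_X(1,1,0) = 2 d₁₃ d₁₂²`, `p_X(1,0,1) = 2 d₁₂ d₁₃²` and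
`p_X(0,1,1) = 2 d₁₂ d₂₃²`. Equating these forces `d₁₂ = d₁₃ = d₂₃`.
-/

namespace MvPolynomial.IsSymmetric

variable {σ R : Type*} [CommSemiring R]

theorem eval_comp_perm {φ : MvPolynomial σ R} (hφ : φ.IsSymmetric) (e : Equiv.Perm σ)
    (x : σ → R) : eval (x ∘ e) φ = eval x φ := by
  rw [← eval_rename, hφ e]

end MvPolynomial.IsSymmetric

namespace BlowupPolynomial

variable {ι R : Type*} [DecidableEq ι] [CommRing R]

/-- With `D i j = d(x_i, x_j)` for `i ≠ j` and `D i i = 2 d(x_i, X ∖ {x_i})`, the blowup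
polynomial is `det (blowupMatrix (D.map C) X)`. -/
def blowupMatrix (D : Matrix ι ι R) (n : ι → R) : Matrix ι ι R :=
  Matrix.of fun i j => if i = j then (n i - 1) * D i i else n i * D i j

theorem eval_det_blowupMatrix [Fintype ι] (D : Matrix ι ι R) (n : ι → R) :
    eval n (blowupMatrix (D.map C) X).det = (blowupMatrix D n).det := by
  rw [RingHom.map_det]
  congr 1
  ext i j
  by_cases h : i = j <;> simp [blowupMatrix, h]

variable (D : Matrix (Fin 3) (Fin 3) R)

theorem det_blowupMatrix_one_one_zero :
    (blowupMatrix D ![1, 1, 0]).det = D 0 1 * D 1 0 * D 2 2 := by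
  simp [blowupMatrix, det_fin_three]

theorem det_blowupMatrix_one_zero_one :
    (blowupMatrix D ![1, 0, 1]).det = D 0 2 * D 1 1 * D 2 0 := by
  simp [blowupMatrix, det_fin_three]

theorem det_blowupMatrix_zero_one_one :
    (blowupMatrix D ![0, 1, 1]).det = D 0 0 * D 1 2 * D 2 1 := by
  simp [blowupMatrix, det_fin_three]

theorem products_eq_of_isSymmetric (hD : (blowupMatrix (D.map C) X).det.IsSymmetric) :
    D 0 1 * D 1 0 * D 2 2 = D 0 2 * D 1 1 * D 2 0 ∧
      D 0 1 * D 1 0 * D 2 2 = D 0 0 * D 1 2 * D 2 1 := by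
  have h₁ := hD.eval_comp_perm (Equiv.swap 1 2) ![1, 1, 0]
  have h₂ := hD.eval_comp_perm (Equiv.swap 0 2) ![1, 1, 0]
  have e₁ : ![(1 : R), 1, 0] ∘ Equiv.swap 1 2 = ![1, 0, 1] := by
    ext i; fin_cases i <;> rfl
  have e₂ : ![(1 : R), 1, 0] ∘ Equiv.swap 0 2 = ![0, 1, 1] := by
    ext i; fin_cases i <;> rfl
  simp only [e₁, e₂, eval_det_blowupMatrix, det_blowupMatrix_one_one_zero,
    det_blowupMatrix_one_zero_one, det_blowupMatrix_zero_one_one] at h₁ h₂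
  exact ⟨h₁.symm, h₂.symm⟩

end BlowupPolynomial

theorem eq_and_eq_of_mul_mul_eq {a b c : ℝ} (ha : 0 < a) (hab : a ≤ b) (hbc : b ≤ c)
    (h₁ : a * a * b = a * b * b) (h₂ : a * a * b = a * c * c) : a = b ∧ b = c := by
  have hb : 0 < b := ha.trans_le hab
  have hab' : a = b := by
    have : a * b * (b - a) = 0 := by linear_combination -h₁
    have := (mul_eq_zero.1 this).resolve_left (mul_pos ha hb).ne'
    linarith
  subst hab'
  have : a * ((c - a) * (c + a)) = 0 := by linear_combination -h₂
  have := (mul_eq_zero.1 ((mul_eq_zero.1 this).resolve_left ha.ne')).resolve_right (by linarith)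
  exact ⟨rfl, by linarith⟩

theorem blowup_poly_symmetric_three_points_general (d12 d13 d23 : ℝ)
    (h1 : 0 < d12) (h2 : d12 ≤ d13) (h3 : d13 ≤ d23)
    (hsym : MvPolynomial.IsSymmetric
      ((Matrix.of
        ![![(MvPolynomial.X 0 - 1) * MvPolynomial.C (2 * d12),
            MvPolynomial.X 0 * MvPolynomial.C d12,
            MvPolynomial.X 0 * MvPolynomial.C d13],
          ![MvPolynomial.X 1 * MvPolynomial.C d12,
            (MvPolynomial.X 1 - 1) * MvPolynomial.C (2 * d12),
            MvPolynomial.X 1 * MvPolynomial.C d23],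
          ![MvPolynomial.X 2 * MvPolynomial.C d13,
            MvPolynomial.X 2 * MvPolynomial.C d23,
            (MvPolynomial.X 2 - 1) * MvPolynomial.C (2 * d13)]] :
        Matrix (Fin 3) (Fin 3) (MvPolynomial (Fin 3) ℝ)).det)) :
    d12 = d13 ∧ d13 = d23 := by
  set D : Matrix (Fin 3) (Fin 3) ℝ := !![2 * d12, d12, d13; d12, 2 * d12, d23; d13, d23, 2 * d13]
  have hD : (BlowupPolynomial.blowupMatrix (D.map C) X).det.IsSymmetric := by
    convert hsym using 2
    ext i j
    fin_cases i <;> fin_cases j <;> simp [BlowupPolynomial.blowupMatrix, D, mul_comm]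
  obtain ⟨h₁, h₂⟩ := BlowupPolynomial.products_eq_of_isSymmetric D hD
  simp only [D, of_apply, cons_val', cons_val_zero, cons_val_one, cons_val_two, empty_val',
    cons_val_fin_one, head_cons, head_fin_const, tail_cons] at h₁ h₂
  exact eq_and_eq_of_mul_mul_eq h1 h2 h3 (by linarith) (by linarith)

/-- for a three-point metric space with pairwise distances
`d12 ≤ d13 ≤ d23`, if the blowup-polynomial `p_X = det N` is symmetric in
`n_1, n_2, n_3`, then all three distances are equal (the metric is a rescaled
discrete metric). -/
theorem blowup_poly_symmetric_three_points (d12 d13 d23 : ℝ)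
    (h1 : 0 < d12) (h2 : d12 ≤ d13) (h3 : d13 ≤ d23)
    (t1 : d23 ≤ d12 + d13) (t2 : d13 ≤ d12 + d23) (t3 : d12 ≤ d13 + d23)
    (hsym : MvPolynomial.IsSymmetric
      ((Matrix.of
        ![![(MvPolynomial.X 0 - 1) * MvPolynomial.C (2 * d12),
            MvPolynomial.X 0 * MvPolynomial.C d12,
            MvPolynomial.X 0 * MvPolynomial.C d13],
          ![MvPolynomial.X 1 * MvPolynomial.C d12,
            (MvPolynomial.X 1 - 1) * MvPolynomial.C (2 * d12),
            MvPolynomial.X 1 * MvPolynomial.C d23],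
          ![MvPolynomial.X 2 * MvPolynomial.C d13,
            MvPolynomial.X 2 * MvPolynomial.C d23,
            (MvPolynomial.X 2 - 1) * MvPolynomial.C (2 * d13)]] :
        Matrix (Fin 3) (Fin 3) (MvPolynomial (Fin 3) ℝ)).det)) :
    d12 = d13 ∧ d13 = d23 :=
  blowup_poly_symmetric_three_points_general d12 d13 d23 h1 h2 h3 hsym
end

section
/- Let k ≥ 2 and let K_{r,s} = K_2[(r,s)] be the complete bipartite graph, regarded as a graph metric space. Then its blowup-polynomial is p_{K_{r,s}}(n_1,…,n_r; m_1,…,m_s) = (−2)^{r+s−2} ( 3 (Σ_i n_i)(Σ_j m_j) − 4 Σ_i n_i − 4 Σ_j m_j + 4 ). -/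
open Matrix MvPolynomial BigOperators


lemma key_det (r s : ℕ) (x : Fin (r+1) ⊕ Fin (s+1) → ℝ) :
    (Matrix.diagonal (fun _ : Fin (r+1) ⊕ Fin (s+1) => (-2:ℝ)) +
      Matrix.diagonal x *
        Matrix.of (fun v w : Fin (r+1) ⊕ Fin (s+1) =>
          if (v.isLeft = w.isLeft) then (2:ℝ) else 1)).det
    = (-2:ℝ) ^ (r + s) *
        (3 * (∑ i, x (Sum.inl i)) * (∑ j, x (Sum.inr j))
          - 4 * (∑ i, x (Sum.inl i)) - 4 * (∑ j, x (Sum.inr j)) + 4) := by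
  classical
  set U : Matrix (Fin (r+1) ⊕ Fin (s+1)) (Fin 3) ℝ :=
    Matrix.of (fun v k =>
      x v * (if k = 0 then 1 else if k = 1 then (if v.isLeft then 1 else 0)
        else (if v.isLeft then 0 else 1))) with hU
  set V : Matrix (Fin 3) (Fin (r+1) ⊕ Fin (s+1)) ℝ :=
    Matrix.of (fun k w =>
      if k = 0 then 1 else if k = 1 then (if w.isLeft then 1 else 0)
        else (if w.isLeft then 0 else 1)) with hV
  have hA : (Matrix.diagonal (fun _ : Fin (r+1) ⊕ Fin (s+1) => (-2:ℝ)) +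
      Matrix.diagonal x *
        Matrix.of (fun v w : Fin (r+1) ⊕ Fin (s+1) =>
          if (v.isLeft = w.isLeft) then (2:ℝ) else 1))
      = (-2:ℝ) • (1 + ((-(2:ℝ)⁻¹) • U) * V) := by
    rw [smul_add, Matrix.smul_mul, smul_smul]
    norm_num
    ext v w
    simp only [Matrix.add_apply, Matrix.smul_apply, Matrix.one_apply,
      Matrix.diagonal_apply, Matrix.mul_apply, Matrix.of_apply, Fin.sum_univ_three]
    rcases v with v | v <;> rcases w with w | w <;>
      simp [hU, hV, Matrix.one_apply, Sum.inl.injEq, Sum.inr.injEq] <;>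
      split_ifs <;> simp_all <;> ring
  rw [hA, Matrix.det_smul, Matrix.det_one_add_mul_comm]
  have hcard : Fintype.card (Fin (r+1) ⊕ Fin (s+1)) = r + s + 2 := by
    simp [Fintype.card_sum]; omega
  rw [hcard]
  set n := ∑ i, x (Sum.inl i) with hn
  set m := ∑ j, x (Sum.inr j) with hm
  have hVU : V * ((-(2:ℝ)⁻¹) • U) =
      !![1 + -(2:ℝ)⁻¹*(n+m) - 1, -(2:ℝ)⁻¹*n, -(2:ℝ)⁻¹*m;
         -(2:ℝ)⁻¹*n, -(2:ℝ)⁻¹*n, 0;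
         -(2:ℝ)⁻¹*m, 0, -(2:ℝ)⁻¹*m] := by
    ext i j
    fin_cases i <;> fin_cases j <;>
      simp [hU, hV, hn, hm, Matrix.mul_apply, Fintype.sum_sum_type,
        Finset.mul_sum, Finset.sum_add_distrib] <;> ring_nf <;>
      simp [Finset.sum_mul, neg_div, mul_neg, sub_eq_add_neg, ← Finset.sum_neg_distrib, add_comm]
  rw [hVU, Matrix.det_fin_three]
  simp [Matrix.one_apply]
  ring

/-- the blowup-polynomial of the complete bipartite graph
`K_{r,s} = K_2[(r,s)]` (with `r, s ≥ 1`) equals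
`(-2)^{r+s-2} (3 (∑ᵢ nᵢ)(∑ⱼ mⱼ) - 4 ∑ᵢ nᵢ - 4 ∑ⱼ mⱼ + 4)`. Its modified
distance matrix has entries `2` within each part (and on the diagonal) and `1`
across the two parts. -/
theorem blowup_poly_complete_bipartite (r s : ℕ) (hr : 1 ≤ r) (hs : 1 ≤ s) :
    ∀ P : MvPolynomial (Fin r ⊕ Fin s) ℝ,
      P = (Matrix.diagonal (fun _ : Fin r ⊕ Fin s => MvPolynomial.C (-2 : ℝ)) +
            Matrix.diagonal (fun v => (MvPolynomial.X v : MvPolynomial (Fin r ⊕ Fin s) ℝ)) *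
              (Matrix.of fun v w : Fin r ⊕ Fin s =>
                MvPolynomial.C
                  (if (v.isLeft = w.isLeft) then (2 : ℝ) else 1))).det →
      P = MvPolynomial.C ((-2 : ℝ) ^ (r + s - 2)) *
            (3 * (∑ i : Fin r, MvPolynomial.X (Sum.inl i)) *
                (∑ j : Fin s, MvPolynomial.X (Sum.inr j)) -
              4 * (∑ i : Fin r, MvPolynomial.X (Sum.inl i)) -
              4 * (∑ j : Fin s, MvPolynomial.X (Sum.inr j)) + 4) := by
  obtain ⟨r, rfl⟩ : ∃ r', r = r' + 1 := ⟨r - 1, (Nat.succ_pred_eq_of_pos hr).symm⟩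
  obtain ⟨s, rfl⟩ : ∃ s', s = s' + 1 := ⟨s - 1, (Nat.succ_pred_eq_of_pos hs).symm⟩
  intro P hP
  subst hP
  apply MvPolynomial.funext
  intro x
  rw [RingHom.map_det, RingHom.mapMatrix_apply]
  have hmap : ((Matrix.diagonal (fun _ : Fin (r+1) ⊕ Fin (s+1) => MvPolynomial.C (-2 : ℝ)) +
      Matrix.diagonal (fun v => (MvPolynomial.X v : MvPolynomial (Fin (r+1) ⊕ Fin (s+1)) ℝ)) *
        (Matrix.of fun v w : Fin (r+1) ⊕ Fin (s+1) =>
          MvPolynomial.C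
            (if (v.isLeft = w.isLeft) then (2 : ℝ) else 1))).map (MvPolynomial.eval x))
      = Matrix.diagonal (fun _ : Fin (r+1) ⊕ Fin (s+1) => (-2:ℝ)) +
        Matrix.diagonal x *
          Matrix.of (fun v w : Fin (r+1) ⊕ Fin (s+1) =>
            if (v.isLeft = w.isLeft) then (2:ℝ) else 1) := by
    ext v w
    simp [Matrix.map_apply, Matrix.add_apply, Matrix.diagonal_mul,
      Matrix.diagonal_apply, apply_ite (MvPolynomial.eval x)]
  rw [hmap, key_det]
  have h2 : r + 1 + (s + 1) - 2 = r + s := by omega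
  simp [h2, MvPolynomial.eval_C, MvPolynomial.eval_X]
end

section
/- Let X = {x_1,…,x_k} (k ≥ 2) be a finite metric space and let C_X be the symmetric matrix with ones on the diagonal and (i,j) entry d(x_i,x_j) / (2 √(d(x_i,X∖{x_i}) d(x_j,X∖{x_j}))) for i ≠ j. Then C_X has at least two strictly positive eigenvalues. -/
/-!
Let `p, q` realise the smallest distance of `X`. Then `e p = e q = d p q`, so the principal
`2 × 2` submatrix of `C_X` on `{p, q}` is `!![1, 1/2; 1/2, 1]`, which is positive definite.
If `C_X` had at most one positive eigenvalue, some nonzero vector `v` supported on `{p, q}` would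
be orthogonal to the eigenvector of the largest eigenvalue; expanding `v` in the eigenbasis then
gives `vᴴ C_X v ≤ 0`, contradicting definiteness.
-/

open Matrix
open scoped ComplexOrder

theorem exists_ne_forall_ne_le {α β : Type*} [Finite α] [Nontrivial α] [LinearOrder β]
    (f : α → α → β) : ∃ p q, p ≠ q ∧ ∀ i j, i ≠ j → f p q ≤ f i j := by
  obtain ⟨a, b, hab⟩ := exists_pair_ne α
  have : Nonempty {x : α × α // x.1 ≠ x.2} := ⟨⟨(a, b), hab⟩⟩
  obtain ⟨⟨⟨p, q⟩, hpq⟩, hmin⟩ :=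
    Finite.exists_min fun x : {x : α × α // x.1 ≠ x.2} ↦ f x.1.1 x.1.2
  exact ⟨p, q, hpq, fun i j hij ↦ hmin ⟨(i, j), hij⟩⟩

theorem Matrix.posDef_fin_two_of_abs_lt_one {t : ℝ} (ht : |t| < 1) :
    (!![1, t; t, 1] : Matrix (Fin 2) (Fin 2) ℝ).PosDef := by
  refine .of_dotProduct_mulVec_pos ?_ fun x hx => ?_
  · ext i j
    fin_cases i <;> fin_cases j <;> rfl
  · have hsq : 0 < x 0 ^ 2 + x 1 ^ 2 := by
      obtain ⟨i, hi⟩ := Function.ne_iff.mp hx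
      fin_cases i
      · exact add_pos_of_pos_of_nonneg (pow_two_pos_of_ne_zero hi) (sq_nonneg _)
      · exact add_pos_of_nonneg_of_pos (sq_nonneg _) (pow_two_pos_of_ne_zero hi)
    obtain ⟨ht₁, ht₂⟩ := abs_lt.mp ht
    simp only [dotProduct, mulVec, Fin.sum_univ_two, star_trivial, of_apply, cons_val',
      cons_val_zero, cons_val_fin_one, cons_val_one, one_mul]
    rcases le_total 0 t with h | h
    · nlinarith [mul_pos (sub_pos.mpr ht₂) hsq, mul_nonneg h (sq_nonneg (x 0 + x 1))]
    · nlinarith [mul_pos (neg_lt_iff_pos_add.mp ht₁) hsq,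
        mul_nonneg (neg_nonneg.mpr h) (sq_nonneg (x 0 - x 1))]

theorem Matrix.star_dotProduct_submatrix_mulVec {m n R : Type*} [Fintype m] [Fintype n]
    [DecidableEq n] [CommSemiring R] [StarRing R] (A : Matrix n n R) (f : m → n) (x : m → R) :
    star x ⬝ᵥ (A.submatrix f f *ᵥ x) =
      star (∑ j, Pi.single (f j) (x j)) ⬝ᵥ (A *ᵥ ∑ j, Pi.single (f j) (x j)) := by
  simp only [star_sum, ← Pi.single_star, mulVec_sum, sum_dotProduct, single_dotProduct,
    Finset.sum_apply, mulVec_single]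
  simp only [dotProduct, mulVec, submatrix_apply, Finset.mul_sum, Pi.star_apply]
  refine Finset.sum_congr rfl fun j _ => Finset.sum_congr rfl fun j' _ => ?_
  simp only [Pi.smul_apply, col_apply, op_smul_eq_mul]

namespace Matrix.IsHermitian

variable {n 𝕜 : Type*} [Fintype n] [DecidableEq n] [RCLike 𝕜] {A : Matrix n n 𝕜}

theorem star_dotProduct_mulVec_eq_sum_eigenvalues (hA : A.IsHermitian) (v : n → 𝕜) :
    star v ⬝ᵥ (A *ᵥ v) = ↑(∑ i, hA.eigenvalues i *
      ‖(star (hA.eigenvectorUnitary : Matrix n n 𝕜) *ᵥ v) i‖ ^ 2) := by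
  have hstar : star v ᵥ* (hA.eigenvectorUnitary : Matrix n n 𝕜) =
      star (star (hA.eigenvectorUnitary : Matrix n n 𝕜) *ᵥ v) := by
    rw [star_mulVec, star_eq_conjTranspose, conjTranspose_conjTranspose]
  conv_lhs => rw [hA.spectral_theorem]
  rw [Unitary.conjStarAlgAut_apply, ← mulVec_mulVec, ← mulVec_mulVec, dotProduct_mulVec, hstar]
  simp only [dotProduct, mulVec_diagonal, Function.comp_apply, Pi.star_apply, RCLike.star_def,
    RCLike.ofReal_sum, RCLike.ofReal_mul, RCLike.ofReal_pow]
  refine Finset.sum_congr rfl fun i _ => ?_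
  rw [← RCLike.conj_mul]
  ring

theorem star_dotProduct_mulVec_nonpos_of_eigenvalues_nonpos (hA : A.IsHermitian) {i₀ : n}
    (hneg : ∀ i, i ≠ i₀ → hA.eigenvalues i ≤ 0) {v : n → 𝕜}
    (hv : (star (hA.eigenvectorUnitary : Matrix n n 𝕜) *ᵥ v) i₀ = 0) :
    star v ⬝ᵥ (A *ᵥ v) ≤ 0 := by
  rw [hA.star_dotProduct_mulVec_eq_sum_eigenvalues, RCLike.ofReal_nonpos]
  refine Finset.sum_nonpos fun i _ => ?_
  rcases eq_or_ne i i₀ with rfl | hi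
  · simp [hv]
  · exact mul_nonpos_of_nonpos_of_nonneg (hneg i hi) (by positivity)

theorem exists_ne_eigenvalues_pos_of_posDef_submatrix (hA : A.IsHermitian) {m : Type*}
    [Fintype m] [Nontrivial m] {f : m → n} (hf : (A.submatrix f f).PosDef) :
    ∃ i j, i ≠ j ∧ 0 < hA.eigenvalues i ∧ 0 < hA.eigenvalues j := by
  by_contra! hcon
  have : Nonempty n := .map f inferInstance
  obtain ⟨i₀, hmax⟩ := Finite.exists_max hA.eigenvalues
  have hneg : ∀ i, i ≠ i₀ → hA.eigenvalues i ≤ 0 := fun i hi ↦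
    not_lt.mp fun h ↦ (hcon i i₀ hi h).not_gt (h.trans_le (hmax i))
  obtain ⟨x, hx, hperp⟩ := exists_ne_zero_dotProduct_eq_zero
    fun j => (star (hA.eigenvectorUnitary : Matrix n n 𝕜)) i₀ (f j)
  have hv :
      (star (hA.eigenvectorUnitary : Matrix n n 𝕜) *ᵥ ∑ j, Pi.single (f j) (x j)) i₀ = 0 := by
    simpa [mulVec_sum, mulVec_single, dotProduct, mul_comm] using hperp
  have hle := hA.star_dotProduct_mulVec_nonpos_of_eigenvalues_nonpos hneg hv
  rw [← star_dotProduct_submatrix_mulVec] at hle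
  exact (hf.dotProduct_mulVec_pos hx).not_ge hle

end Matrix.IsHermitian

theorem CX_two_positive_eigenvalues_general (k : ℕ) (hk : 2 ≤ k)
    (d : Fin k → Fin k → ℝ) (e : Fin k → ℝ)
    (hsymm : ∀ i j, d i j = d j i)
    (hpos : ∀ i j, i ≠ j → 0 < d i j)
    (he : ∀ i, IsLeast {r : ℝ | ∃ j, j ≠ i ∧ r = d i j} (e i))
    (hherm : (Matrix.of fun i j : Fin k =>
        if i = j then (1 : ℝ)
        else d i j / (2 * Real.sqrt (e i * e j))).IsHermitian) :
    ∃ i j : Fin k, i ≠ j ∧ 0 < hherm.eigenvalues i ∧ 0 < hherm.eigenvalues j := by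
  have : Nontrivial (Fin k) := Fin.nontrivial_iff_two_le.mpr hk
  obtain ⟨p, q, hpq, hmin⟩ := exists_ne_forall_ne_le d
  have hep : e p = d p q := (he p).unique
    ⟨⟨q, hpq.symm, rfl⟩, by rintro _ ⟨j, hj, rfl⟩; exact hmin p j hj.symm⟩
  have heq : e q = d p q := (he q).unique
    ⟨⟨p, hpq, hsymm p q⟩, by rintro _ ⟨j, hj, rfl⟩; exact hmin q j hj.symm⟩
  have hdpq := hpos p q hpq
  have hsub : (Matrix.of fun i j : Fin k => if i = j then (1 : ℝ)
      else d i j / (2 * Real.sqrt (e i * e j))).submatrix ![p, q] ![p, q] =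
        !![1, 1 / 2; 1 / 2, 1] := by
    ext i j
    fin_cases i <;> fin_cases j <;>
      simp [hpq, hpq.symm, hep, heq, hsymm q p, Real.sqrt_mul_self hdpq.le] <;> field_simp
  refine hherm.exists_ne_eigenvalues_pos_of_posDef_submatrix (f := ![p, q]) ?_
  rw [hsub]
  exact posDef_fin_two_of_abs_lt_one (by norm_num [abs_of_pos])

/-- for a finite metric space on `k ≥ 2` points, the matrix `C_X`
with unit diagonal and `(i,j)` entry `d(x_i,x_j)/(2√(e_i e_j))` (where
`e_i = d(x_i, X∖{x_i})`) has at least two strictly positive eigenvalues. -/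
theorem CX_two_positive_eigenvalues (k : ℕ) (hk : 2 ≤ k)
    (d : Fin k → Fin k → ℝ) (e : Fin k → ℝ)
    (hd0 : ∀ i, d i i = 0) (hsymm : ∀ i j, d i j = d j i)
    (hpos : ∀ i j, i ≠ j → 0 < d i j)
    (htri : ∀ i j l, d i l ≤ d i j + d j l)
    (he : ∀ i, IsLeast {r : ℝ | ∃ j, j ≠ i ∧ r = d i j} (e i))
    (hherm : (Matrix.of fun i j : Fin k =>
        if i = j then (1 : ℝ)
        else d i j / (2 * Real.sqrt (e i * e j))).IsHermitian) :
    ∃ i j : Fin k, i ≠ j ∧ 0 < hherm.eigenvalues i ∧ 0 < hherm.eigenvalues j :=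
  CX_two_positive_eigenvalues_general k hk d e hsymm hpos he hherm
end
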